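/- For every real number c ≥ 0, the powers of the Grover matrix converge to a rotation by angle 2c: lim_{N→∞} G_N^{⌊c·√N⌋} = [[cos(2c), sin(2c)], [−sin(2c), cos(2c)]], the limit taken entrywise. (This is the rotation interpretation SG^{c√N} ≐ cos(c) + sin(c)·axis used in the paper: c√N Grover iterations implement a rotation by 2c in the plane spanned by the solution and non-solution states.) -/

import Mathlib

open Matrix Real Filter

/-- The 2×2 Grover matrix. -/
noncomputable def GroverM (N : ℕ) : Matrix (Fin 2) (Fin 2) ℝ :=
  !![1 - 2 / (N : ℝ), 2 * Real.sqrt ((N : ℝ) - 1) / (N : ℝ);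
     -(2 * Real.sqrt ((N : ℝ) - 1) / (N : ℝ)), 1 - 2 / (N : ℝ)]

/-! `G_N` is the rotation by `θ_N = 2 arcsin (1/√N)`, so `G_N ^ k` is the rotation by `k θ_N`.
Since `arcsin x ~ x` at `0`, `⌊c √N⌋ θ_N ~ 2 ⌊c √N⌋ / √N → 2 c`, and rotations depend
continuously on the angle. -/

open Topology Asymptotics

theorem HasDerivAt.tendsto_mul_comp {ι : Type*} {l : Filter ι} {f : ℝ → ℝ} {d : ℝ}
    (hf : HasDerivAt f d 0) (hf0 : f 0 = 0) {k a : ι → ℝ} {L : ℝ}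
    (ha : Tendsto a l (𝓝 0)) (hka : Tendsto (fun i ↦ k i * a i) l (𝓝 L)) :
    Tendsto (fun i ↦ k i * f (a i)) l (𝓝 (d * L)) := by
  have hlin : (fun x ↦ f x - x * d) =o[𝓝 0] fun x ↦ x := by
    simpa [hf0] using hasDerivAt_iff_isLittleO.1 hf
  have herr : (fun i ↦ k i * (f (a i) - a i * d)) =o[l] fun _ ↦ (1 : ℝ) :=
    ((isBigO_refl k l).mul_isLittleO (hlin.comp_tendsto ha)).trans_isBigO (hka.isBigO_one ℝ)
  have := (isLittleO_one_iff ℝ).1 herr |>.add (hka.const_mul d)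
  simpa [mul_sub, mul_comm, mul_left_comm] using this

noncomputable def rotationMatrix (θ : ℝ) : Matrix (Fin 2) (Fin 2) ℝ :=
  !![cos θ, sin θ; -sin θ, cos θ]

theorem rotationMatrix_add (a b : ℝ) :
    rotationMatrix (a + b) = rotationMatrix a * rotationMatrix b := by
  ext i j
  fin_cases i <;> fin_cases j <;>
    simp [rotationMatrix, Matrix.mul_apply, cos_add, sin_add] <;> ring

theorem rotationMatrix_pow (θ : ℝ) (n : ℕ) : rotationMatrix θ ^ n = rotationMatrix (n * θ) := by
  induction n with
  | zero => ext i j; fin_cases i <;> fin_cases j <;> simp [rotationMatrix]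
  | succ n ih => rw [pow_succ, ih, ← rotationMatrix_add]; push_cast; ring_nf

theorem continuous_rotationMatrix : Continuous rotationMatrix := by
  refine continuous_pi fun i ↦ continuous_pi fun j ↦ ?_
  fin_cases i <;> fin_cases j <;> simp [rotationMatrix] <;> fun_prop

/-- `sin (groverAngle N / 2) = 1 / √N` is the amplitude of the solution state in the uniform
superposition. -/
noncomputable def groverAngle (N : ℕ) : ℝ := 2 * arcsin (√N)⁻¹

theorem groverM_eq_rotationMatrix (N : ℕ) : GroverM N = rotationMatrix (groverAngle N) := by
  rcases N.eq_zero_or_pos with rfl | hN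
  · ext i j; fin_cases i <;> fin_cases j <;> simp [GroverM, rotationMatrix, groverAngle]
  have hN : (1 : ℝ) ≤ N := by exact_mod_cast hN
  have hs : 0 < √(N : ℝ) := by positivity
  have hsq : √(N : ℝ) ^ 2 = N := sq_sqrt (by positivity)
  have hsin : sin (arcsin (√N)⁻¹) = (√N)⁻¹ :=
    sin_arcsin (by linarith [inv_pos.2 hs]) (inv_le_one_of_one_le₀ (one_le_sqrt.2 hN))
  have hcos : cos (arcsin (√N)⁻¹) = √(N - 1) / √N := by
    rw [cos_arcsin, inv_pow, hsq, ← sqrt_div (by linarith)]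
    congr 1
    field_simp
  have hcos2 : cos (groverAngle N) = 1 - 2 / N := by
    rw [groverAngle, cos_two_mul, cos_sq', hsin, inv_pow, hsq]
    ring
  have hsin2 : sin (groverAngle N) = 2 * √(N - 1) / N := by
    rw [groverAngle, sin_two_mul, hsin, hcos]
    field_simp
    rw [hsq]
  simp only [GroverM, rotationMatrix, hcos2, hsin2]

theorem grover_power_tendsto_rotation (c : ℝ) (hc : 0 ≤ c) :
    Tendsto (fun N : ℕ => GroverM N ^ ⌊c * Real.sqrt N⌋₊) atTop
      (nhds !![Real.cos (2 * c), Real.sin (2 * c);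
               -Real.sin (2 * c), Real.cos (2 * c)]) := by
  have hsqrt : Tendsto (fun N : ℕ ↦ √(N : ℝ)) atTop atTop :=
    tendsto_sqrt_atTop.comp tendsto_natCast_atTop_atTop
  have hsteps : Tendsto (fun N : ℕ ↦ (⌊c * √N⌋₊ : ℝ) * (√N)⁻¹) atTop (𝓝 c) := by
    simpa only [Function.comp_def, ← div_eq_mul_inv] using
      (tendsto_nat_floor_mul_div_atTop hc).comp hsqrt
  have harcsin : HasDerivAt arcsin 1 0 := by
    simpa using hasDerivAt_arcsin (x := 0) (by norm_num) (by norm_num)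
  have hangle : Tendsto (fun N : ℕ ↦ (⌊c * √N⌋₊ : ℝ) * groverAngle N) atTop (𝓝 (2 * c)) := by
    have := harcsin.tendsto_mul_comp arcsin_zero (tendsto_inv_atTop_zero.comp hsqrt) hsteps
    simpa only [Function.comp_def, groverAngle, one_mul, mul_left_comm] using this.const_mul 2
  show Tendsto _ atTop (𝓝 (rotationMatrix (2 * c)))
  simpa only [Function.comp_def, groverM_eq_rotationMatrix, rotationMatrix_pow] using
    (continuous_rotationMatrix.tendsto (2 * c)).comp hangle
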